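/- arXiv:math/9211206 — 7 statements merged into one kernel-verified Lean document; each statement's English description precedes it below -/
import Mathlib

section
/- No universal analytic set U ⊆ ℝ² belongs to the σ-algebra generated by rectangles A × B with A ⊆ ℝ arbitrary and B ⊆ ℝ Lebesgue measurable. -/
open MeasureTheory Set

/-- Helper: equality of intersections passes to complements. -/
lemma compl_inter_eq_of_inter_eq {α : Type*} {s g t : Set α} (h : s ∩ t = g ∩ t) :
    sᶜ ∩ t = gᶜ ∩ t := by
  ext y
  by_cases hy : y ∈ t
  · have := Set.ext_iff.1 h y
    simp [hy] at this ⊢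
    tauto
  · simp [hy]

/-- The image of an analytic set in ℝ under a measurable map to ℝ is analytic. -/
lemma analyticSet_image_of_measurable {s : Set ℝ} (hs : AnalyticSet s) {f : ℝ → ℝ}
    (hf : Measurable f) : AnalyticSet (f '' s) := by
  rcases analyticSet_iff_exists_polishSpace_range.1 hs with ⟨Z, tZ, pZ, g, hg, rfl⟩
  letI : MeasurableSpace Z := borel Z
  haveI : BorelSpace Z := ⟨rfl⟩
  have : f '' range g = range (f ∘ g) := by
    rw [Set.range_comp]
  rw [this, ← Set.image_univ]
  exact MeasurableSet.univ.analyticSet_image (hf.comp hg.measurable)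

theorem stmt_2 (U : Set (ℝ × ℝ))
    (hUa : AnalyticSet U)
    (hUniv : ∀ A : Set ℝ, AnalyticSet A → ∃ x : ℝ, A = {y | (x, y) ∈ U}) :
    ¬ MeasurableSet[MeasurableSpace.generateFrom
      {R : Set (ℝ × ℝ) | ∃ (A B : Set ℝ),
        NullMeasurableSet B (volume : Measure ℝ) ∧ R = A ×ˢ B}] U := by
  intro hU
  classical
  -- The property: sections agree with a Borel set off a fixed null set.
  set P : Set (ℝ × ℝ) → Prop := fun V =>
    ∃ N : Set ℝ, MeasurableSet N ∧ volume N = 0 ∧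
      ∀ x : ℝ, ∃ G : Set ℝ, MeasurableSet G ∧ {y : ℝ | (x, y) ∈ V} ∩ Nᶜ = G ∩ Nᶜ with hP
  -- P defines a σ-algebra.
  let m : MeasurableSpace (ℝ × ℝ) :=
    { MeasurableSet' := P
      measurableSet_empty := ⟨∅, MeasurableSet.empty, measure_empty, fun x =>
        ⟨∅, MeasurableSet.empty, by simp [hP]⟩⟩
      measurableSet_compl := by
        rintro V ⟨N, hNm, hN0, hG⟩
        refine ⟨N, hNm, hN0, fun x => ?_⟩
        obtain ⟨G, hGm, hGe⟩ := hG x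
        exact ⟨Gᶜ, hGm.compl, compl_inter_eq_of_inter_eq hGe⟩
      measurableSet_iUnion := by
        intro V hV
        choose N hNm hN0 hG using hV
        refine ⟨⋃ i, N i, MeasurableSet.iUnion hNm, measure_iUnion_null hN0, fun x => ?_⟩
        choose G hGm hGe using fun i => hG i x
        refine ⟨⋃ i, G i, MeasurableSet.iUnion hGm, ?_⟩
        have key : ∀ i y, y ∈ (⋃ j, N j)ᶜ → ((x, y) ∈ V i ↔ y ∈ G i) := by
          intro i y hy
          simp only [Set.mem_compl_iff, Set.mem_iUnion, not_exists] at hy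
          have hyN : y ∈ (N i)ᶜ := hy i
          have := Set.ext_iff.1 (hGe i) y
          simp only [Set.mem_inter_iff, Set.mem_setOf_eq, Set.mem_compl_iff] at this
          constructor
          · intro h; exact (this.1 ⟨h, hyN⟩).1
          · intro h; exact (this.2 ⟨h, hyN⟩).1
        ext y
        by_cases hy : y ∈ (⋃ j, N j)ᶜ
        · simp only [Set.mem_inter_iff, Set.mem_setOf_eq, Set.mem_iUnion, hy, and_true]
          exact exists_congr fun i => key i y hy
        · constructor <;> rintro ⟨-, h2⟩ <;> exact absurd h2 hy }
  -- Every generator satisfies P.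
  have hgen : MeasurableSpace.generateFrom
      {R : Set (ℝ × ℝ) | ∃ (A B : Set ℝ),
        NullMeasurableSet B (volume : Measure ℝ) ∧ R = A ×ˢ B} ≤ m := by
    apply MeasurableSpace.generateFrom_le
    rintro R ⟨A, B, hB, rfl⟩
    set G := toMeasurable volume B with hGdef
    have hGm : MeasurableSet G := measurableSet_toMeasurable volume B
    have hae : B =ᵐ[volume] G := (hB.toMeasurable_ae_eq).symm
    have hsd : volume (symmDiff B G) = 0 := measure_symmDiff_eq_zero_iff.2 hae
    set N := toMeasurable volume (symmDiff B G) with hNdef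
    have hNm : MeasurableSet N := measurableSet_toMeasurable volume _
    have hN0 : volume N = 0 := by rw [hNdef, measure_toMeasurable]; exact hsd
    refine ⟨N, hNm, hN0, fun x => ?_⟩
    have hBG : ∀ y, y ∈ Nᶜ → (y ∈ B ↔ y ∈ G) := by
      intro y hy
      have hy' : y ∉ symmDiff B G := fun h => hy (subset_toMeasurable volume _ h)
      simp only [Set.mem_symmDiff] at hy'
      tauto
    by_cases hx : x ∈ A
    · refine ⟨G, hGm, ?_⟩
      ext y
      simp only [Set.mem_inter_iff, Set.mem_setOf_eq, Set.mem_prod, hx, true_and,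
        Set.mem_compl_iff]
      constructor
      · rintro ⟨h1, h2⟩; exact ⟨(hBG y h2).1 h1, h2⟩
      · rintro ⟨h1, h2⟩; exact ⟨(hBG y h2).2 h1, h2⟩
    · refine ⟨∅, MeasurableSet.empty, ?_⟩
      ext y
      simp [Set.mem_prod, hx]
  have hPU : P U := hgen U hU
  obtain ⟨N, hNm, hN0, hsec⟩ := hPU
  -- N^c is uncountable.
  have hNc_unc : ¬Countable ↥(Nᶜ) := by
    intro h
    have hc : (Nᶜ : Set ℝ).Countable := countable_coe_iff.1 h
    have h1 : volume (Nᶜ : Set ℝ) = 0 := hc.measure_zero volume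
    have : volume (Set.univ : Set ℝ) = 0 := by
      have := measure_union_le (μ := volume) N Nᶜ
      rw [Set.union_compl_self, hN0, h1] at this
      simp at this
    rw [Real.volume_univ] at this
    exact ENNReal.top_ne_zero this
  haveI : StandardBorelSpace ↥(Nᶜ) := hNm.compl.standardBorel
  have hR_unc : ¬Countable ℝ := fun h => Cardinal.not_countable_real (countable_coe_iff.1 (by
    rw [Set.countable_coe_iff] at *
    exact Set.countable_univ_iff.2 h))
  -- Borel isomorphism from ℝ into N^c.
  let e : ℝ ≃ᵐ ↥(Nᶜ) := PolishSpace.measurableEquivOfNotCountable hR_unc hNc_unc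
  let f : ℝ → ℝ := fun x => (e x : ℝ)
  have hf_meas : Measurable f := measurable_subtype_coe.comp e.measurable
  have hf_inj : Function.Injective f := Subtype.val_injective.comp e.injective
  have hf_range : ∀ x, f x ∈ Nᶜ := fun x => (e x).2
  -- The diagonal set D.
  set D : Set ℝ := {x : ℝ | (x, x) ∈ U} with hD
  have hDa : AnalyticSet D := by
    have : Continuous (fun x : ℝ => (x, x)) := continuous_id.prodMk continuous_id
    exact hUa.preimage this
  -- A = f '' D is analytic and contained in N^c.
  have hAa : AnalyticSet (f '' D) := analyticSet_image_of_measurable hDa hf_meas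
  have hAsub : f '' D ⊆ Nᶜ := by rintro y ⟨x, -, rfl⟩; exact hf_range x
  -- By universality, A is a section of U, hence Borel.
  obtain ⟨x₀, hx₀⟩ := hUniv (f '' D) hAa
  obtain ⟨G, hGm, hGe⟩ := hsec x₀
  have hA_eq : f '' D = G ∩ Nᶜ := by
    rw [← hGe, ← hx₀]
    exact (Set.inter_eq_left.2 hAsub).symm
  have hA_meas : MeasurableSet (f '' D) := hA_eq ▸ hGm.inter hNm.compl
  -- Hence D is Borel, since f is a measurable embedding.
  have hfe : MeasurableEmbedding f := hf_meas.measurableEmbedding hf_inj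
  have hD_meas : MeasurableSet D := hfe.measurableSet_image.1 hA_meas
  -- Then Dᶜ is analytic, and universality yields the diagonal contradiction.
  have hDc_a : AnalyticSet Dᶜ := hD_meas.compl.analyticSet
  obtain ⟨z, hz⟩ := hUniv Dᶜ hDc_a
  have : z ∈ Dᶜ ↔ z ∈ D := by
    rw [hz]; rfl
  simp [Set.mem_compl_iff] at this
end

section
/- No universal analytic set U ⊆ ℝ² belongs to the σ-algebra generated by rectangles A × B with A ⊆ ℝ arbitrary and B ⊆ ℝ having the Baire property. -/
open MeasureTheory Set Filter Topology Function

/-!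
A set measurable for a generated σ-algebra is already measurable for the σ-algebra generated by
countably many of the generators, so `U` lies in the σ-algebra generated by countably many
rectangles `Aₙ × Bₙ`, and all vertical sections of `U` lie in the σ-algebra generated by the
Baire sets `Bₙ`. Each `Bₙ` agrees with an open set off a meagre set, hence on a dense `Gδ` set `G`
every section of `U` agrees with a Borel set. On the other hand `G` is uncountable, so it contains
a continuous injective image of `ℕ → ℕ`, and diagonalizing along it shows that the universal set
has an analytic section inside `G` which is not Borel.
-/

namespace MeasurableSpace

theorem exists_countable_subset_measurableSet_generateFrom {α : Type*}
    {S : Set (Set α)} {t : Set α} (h : MeasurableSet[generateFrom S] t) :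
    ∃ T ⊆ S, T.Countable ∧ MeasurableSet[generateFrom T] t := by
  induction h with
  | basic u hu => exact ⟨{u}, singleton_subset_iff.2 hu, countable_singleton u,
      measurableSet_generateFrom rfl⟩
  | empty => exact ⟨∅, empty_subset _, countable_empty, @MeasurableSet.empty _ (generateFrom ∅)⟩
  | compl u _ ih =>
    obtain ⟨T, hTS, hTc, hu⟩ := ih
    exact ⟨T, hTS, hTc, hu.compl⟩
  | iUnion f _ ih =>
    choose T hTS hTc hf using ih
    exact ⟨⋃ n, T n, iUnion_subset hTS, countable_iUnion hTc,
      .iUnion fun n => generateFrom_mono (subset_iUnion T n) _ (hf n)⟩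

theorem measurable_prodMk_left_generateFrom_prod {α β : Type*}
    (𝓑 : Set (Set β)) (x : α) :
    Measurable[generateFrom 𝓑, generateFrom {R | ∃ A, ∃ B ∈ 𝓑, R = A ×ˢ B}] (Prod.mk x) := by
  refine @measurable_generateFrom _ _ (generateFrom 𝓑) _ _ ?_
  rintro _ ⟨A, B, hB, rfl⟩
  by_cases hx : x ∈ A
  · rw [mk_preimage_prod_right hx]
    exact measurableSet_generateFrom hB
  · rw [mk_preimage_prod_right_eq_empty hx]
    exact @MeasurableSet.empty _ (generateFrom 𝓑)

end MeasurableSpace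

theorem exists_isGδ_dense_inter_eq_of_baireMeasurableSet {X : Type*} [TopologicalSpace X]
    [BaireSpace X] [MeasurableSpace X] [OpensMeasurableSpace X] {𝓑 : Set (Set X)}
    (h𝓑c : 𝓑.Countable) (h𝓑 : ∀ B ∈ 𝓑, BaireMeasurableSet B) :
    ∃ G, IsGδ G ∧ Dense G ∧ ∀ t, MeasurableSet[MeasurableSpace.generateFrom 𝓑] t →
      ∃ V, MeasurableSet V ∧ G ∩ t = G ∩ V := by
  choose! O hO hBO using fun B hB => (h𝓑 B hB).residualEq_isOpen
  have hres : {x | ∀ B ∈ 𝓑, x ∈ B ↔ x ∈ O B} ∈ residual X :=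
    (eventually_countable_ball h𝓑c).2 fun B hB => (hBO B hB).mono fun x hx => iff_of_eq hx
  obtain ⟨G, hGsub, hGδ, hGd⟩ := mem_residual.1 hres
  refine ⟨G, hGδ, hGd, fun t ht => ?_⟩
  have hle : (MeasurableSpace.generateFrom 𝓑).comap ((↑) : G → X) ≤
      MeasurableSpace.comap ((↑) : G → X) ‹_› := by
    rw [MeasurableSpace.comap_generateFrom]
    refine MeasurableSpace.generateFrom_le ?_
    rintro _ ⟨B, hB, rfl⟩
    refine ⟨O B, (hO B hB).measurableSet, ?_⟩
    ext ⟨x, hx⟩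
    exact ((hGsub hx) B hB).symm
  obtain ⟨V, hV, hVt⟩ := hle _ ⟨t, ht, rfl⟩
  exact ⟨V, hV, (Subtype.preimage_coe_eq_preimage_coe_iff.1 hVt).symm⟩

theorem IsGδ.not_countable_of_dense {X : Type*} [TopologicalSpace X] [BaireSpace X] [T1Space X]
    [Nonempty X] [∀ x : X, (𝓝[≠] x).NeBot] {s : Set X} (hs : IsGδ s) (hd : Dense s) :
    ¬ s.Countable := by
  intro hc
  refine not_isMeagre_of_isGδ_of_dense hs hd ?_
  simpa using isMeagre_biUnion hc fun x _ =>
    (isClosed_singleton.isNowhereDense_iff.2 (interior_singleton x)).isMeagre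

theorem exists_nat_nat_continuous_injective_nat_bool :
    ∃ Φ : (ℕ → ℕ) → (ℕ → Bool), Continuous Φ ∧ Injective Φ := by
  -- `Φ ν` is the indicator of the graph of `ν`, coded through `Nat.pair`.
  refine ⟨fun ν k => decide ((Nat.unpair k).2 = ν (Nat.unpair k).1),
    continuous_pi fun k => continuous_of_discreteTopology.comp (continuous_apply _)
      (g := fun n => decide ((Nat.unpair k).2 = n)), ?_⟩
  intro ν μ h
  funext i
  simpa using congrFun h (Nat.pair i (ν i))

theorem MeasurableSet.exists_nat_nat_injection_of_not_countable {Y : Type*}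
    [tY : TopologicalSpace Y] [PolishSpace Y] [MeasurableSpace Y] [BorelSpace Y] {s : Set Y}
    (hs : MeasurableSet s)
    (hsc : ¬ s.Countable) :
    ∃ f : (ℕ → ℕ) → Y, range f ⊆ s ∧ Continuous f ∧ Injective f := by
  obtain ⟨f, hfs, hfc, hfi⟩ : ∃ f : (ℕ → Bool) → Y, range f ⊆ s ∧ Continuous f ∧ Injective f := by
    -- `s` is closed for a finer Polish topology `t`, where the Cantor–Bendixson argument applies.
    obtain ⟨t, ht, hpol, hs', -⟩ := hs.isClopenable
    obtain ⟨f, hfs, hfc, hfi⟩ :=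
      @IsClosed.exists_nat_bool_injection_of_not_countable Y t hpol s hs' hsc
    exact ⟨f, hfs, @Continuous.comp _ _ _ _ t tY f id (continuous_id_of_le ht) hfc, hfi⟩
  obtain ⟨Φ, hΦc, hΦi⟩ := exists_nat_nat_continuous_injective_nat_bool
  exact ⟨f ∘ Φ, (range_comp_subset_range Φ f).trans hfs, hfc.comp hΦc, hfi.comp hΦi⟩

theorem MeasureTheory.AnalyticSet.exists_subset_not_measurableSet_of_universal {X Y : Type*}
    [TopologicalSpace X] [PolishSpace X] [TopologicalSpace Y] [PolishSpace Y]
    [MeasurableSpace Y] [BorelSpace Y] {U : Set (X × Y)} (hUa : AnalyticSet U)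
    (hUniv : ∀ A : Set Y, AnalyticSet A → ∃ x, A = {y | (x, y) ∈ U})
    {s : Set Y} (hs : MeasurableSet s) (hsc : ¬ s.Countable) :
    ∃ E ⊆ s, AnalyticSet E ∧ ¬ MeasurableSet E := by
  obtain ⟨x₀, -⟩ := hUniv ∅ analyticSet_empty
  have : Nonempty X := ⟨x₀⟩
  obtain ⟨g, hgc, hgs⟩ := PolishSpace.exists_nat_nat_continuous_surjective X
  obtain ⟨f, hfs, hfc, hfi⟩ := hs.exists_nat_nat_injection_of_not_countable hsc
  set P := (fun ν => (g ν, f ν)) ⁻¹' U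
  refine ⟨f '' P, (image_subset_range f P).trans hfs,
    (hUa.preimage (hgc.prodMk hfc)).image_of_continuous hfc, fun hE => ?_⟩
  -- Lusin–Souslin makes `f '' Pᶜ` Borel, so it is the section at some `g ν`: diagonalize at `ν`.
  have hD : MeasurableSet (f '' Pᶜ) := by
    rw [image_compl_eq_range_sdiff_image hfi]
    exact (measurableSet_range_of_continuous_injective hfc hfi).diff hE
  obtain ⟨x, hx⟩ := hUniv _ hD.analyticSet
  obtain ⟨ν, rfl⟩ := hgs x
  have hdiag : f ν ∈ f '' Pᶜ ↔ ν ∉ P := hfi.mem_set_image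
  rw [hx] at hdiag
  exact iff_not_self hdiag

theorem stmt_3 (U : Set (ℝ × ℝ))
    (hUa : AnalyticSet U)
    (hUniv : ∀ A : Set ℝ, AnalyticSet A → ∃ x : ℝ, A = {y | (x, y) ∈ U}) :
    ¬ MeasurableSet[MeasurableSpace.generateFrom
      {R : Set (ℝ × ℝ) | ∃ (A B : Set ℝ),
        BaireMeasurableSet B ∧ R = A ×ˢ B}] U := by
  intro hU
  obtain ⟨T, hTS, hTc, hUT⟩ :=
    MeasurableSpace.exists_countable_subset_measurableSet_generateFrom hU
  choose! A B hB hAB using fun R (hR : R ∈ T) =>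
    (hTS hR : ∃ A B : Set ℝ, BaireMeasurableSet B ∧ R = A ×ˢ B)
  have hTB : T ⊆ {R | ∃ A', ∃ B' ∈ B '' T, R = A' ×ˢ B'} :=
    fun R hR => ⟨A R, B R, mem_image_of_mem B hR, hAB R hR⟩
  have hsec : ∀ x, MeasurableSet[MeasurableSpace.generateFrom (B '' T)] {y | (x, y) ∈ U} :=
    fun x => MeasurableSpace.measurable_prodMk_left_generateFrom_prod (B '' T) x <|
      MeasurableSpace.generateFrom_mono hTB _ hUT
  obtain ⟨G, hGδ, hGd, hG⟩ :=
    exists_isGδ_dense_inter_eq_of_baireMeasurableSet (hTc.image B) (forall_mem_image.2 hB)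
  obtain ⟨E, hEG, hEa, hEm⟩ := hUa.exists_subset_not_measurableSet_of_universal hUniv
    hGδ.measurableSet (hGδ.not_countable_of_dense hGd)
  obtain ⟨x, rfl⟩ := hUniv E hEa
  obtain ⟨V, hV, hGV⟩ := hG _ (hsec x)
  rw [← inter_eq_right.2 hEG, hGV] at hEm
  exact hEm (hGδ.measurableSet.inter hV)
end

section
/- For E ⊆ ℝ, E is Borel if and only if E' = {(x,y) : x + y ∈ E} is in the σ-algebra generated by rectangles A × B with A, B ⊆ ℝ Lebesgue measurable. -/
/-!
Addition is measurable for the σ-algebra generated by Lebesgue rectangles, since both projections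
are. Conversely, the sets `S ⊆ ℝ²` whose slices `{x | (x, t - x) ∈ S}` agree a.e., for every `t`
at once, with the sections `W_t` of one Borel set `W ⊆ ℝ²` form a σ-algebra, and it contains every
Lebesgue rectangle `A ×ˢ B` (take `W = {(t, x) | x ∈ A', t - x ∈ B'}` for Borel `A' =ᵐ A`,
`B' =ᵐ B`). For `S = E'` the slice at `t` is `ℝ` or `∅` according as `t ∈ E`, so
`E = {t | λ W_t ≠ 0}`, which is Borel because section measures of a Borel set are measurable.
-/

open MeasureTheory Set

abbrev MeasurableSpace.ofAESections {T α β : Type*} [MeasurableSpace T] [MeasurableSpace α]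
    (μ : Measure α) (φ : T → α → β) : MeasurableSpace β where
  MeasurableSet' S := ∃ W : Set (T × α), MeasurableSet W ∧ ∀ t, φ t ⁻¹' S =ᵐ[μ] Prod.mk t ⁻¹' W
  measurableSet_empty := ⟨∅, .empty, fun _ => by simp⟩
  measurableSet_compl _ := fun ⟨W, hW, h⟩ => ⟨Wᶜ, hW.compl, fun t => (h t).compl⟩
  measurableSet_iUnion _ hS := by
    choose W hW h using hS
    exact ⟨⋃ i, W i, .iUnion hW, fun t => by
      simpa only [preimage_iUnion] using Filter.EventuallyEq.countable_iUnion fun i => h i t⟩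

theorem measurableSet_of_ae_sections {T α : Type*} [MeasurableSpace T] [MeasurableSpace α]
    {μ : Measure α} [SFinite μ] [NeZero μ] {E : Set T} {W : Set (T × α)} (hW : MeasurableSet W)
    (h : ∀ t, Prod.mk t ⁻¹' W =ᵐ[μ] {_x : α | t ∈ E}) : MeasurableSet E := by
  have hE : E = (fun t => μ (Prod.mk t ⁻¹' W)) ⁻¹' {0}ᶜ := by
    ext t
    by_cases ht : t ∈ E <;> simp [measure_congr (h t), ht, NeZero.ne]
  rw [hE]
  exact measurable_measure_prodMk_left hW (measurableSet_singleton 0).compl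

def nullMeasurableRectangles {α β : Type*} [MeasurableSpace α] [MeasurableSpace β]
    (μ : Measure α) (ν : Measure β) : Set (Set (α × β)) :=
  {R | ∃ A B, NullMeasurableSet A μ ∧ NullMeasurableSet B ν ∧ R = A ×ˢ B}

section Rectangles

variable {α β : Type*} [MeasurableSpace α] [MeasurableSpace β] {μ : Measure α} {ν : Measure β}

theorem measurable_fst_generateFrom_nullMeasurableRectangles :
    Measurable[MeasurableSpace.generateFrom (nullMeasurableRectangles μ ν)]
      (Prod.fst : α × β → α) :=
  fun A hA => .basic _ ⟨A, univ, hA.nullMeasurableSet, .univ, prod_univ.symm⟩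

theorem measurable_snd_generateFrom_nullMeasurableRectangles :
    Measurable[MeasurableSpace.generateFrom (nullMeasurableRectangles μ ν)]
      (Prod.snd : α × β → β) :=
  fun B hB => .basic _ ⟨univ, B, .univ, hB.nullMeasurableSet, univ_prod.symm⟩

end Rectangles

section AddGroup

variable {G : Type*} [AddCommGroup G] [MeasurableSpace G] [MeasurableAdd₂ G] [MeasurableNeg G]
  {μ : Measure G} [SFinite μ] [μ.IsAddLeftInvariant]

theorem generateFrom_nullMeasurableRectangles_le_ofAESections :
    MeasurableSpace.generateFrom (nullMeasurableRectangles μ μ) ≤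
      .ofAESections μ (fun t x => (x, t - x)) := by
  refine MeasurableSpace.generateFrom_le ?_
  rintro _ ⟨A, B, hA, hB, rfl⟩
  refine ⟨{p | p.2 ∈ toMeasurable μ A ∧ p.1 - p.2 ∈ toMeasurable μ B},
    (measurable_snd (measurableSet_toMeasurable μ A)).inter
      ((measurable_fst.sub measurable_snd) (measurableSet_toMeasurable μ B)), fun t => ?_⟩
  exact hA.toMeasurable_ae_eq.symm.inter
    ((quasiMeasurePreserving_sub_left μ t).preimage_ae_eq hB.toMeasurable_ae_eq.symm)

end AddGroup

theorem stmt_5 (E : Set ℝ) :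
    MeasurableSet E ↔
      MeasurableSet[MeasurableSpace.generateFrom
        {R : Set (ℝ × ℝ) | ∃ (A B : Set ℝ),
          NullMeasurableSet A (volume : Measure ℝ) ∧
          NullMeasurableSet B (volume : Measure ℝ) ∧ R = A ×ˢ B}]
        {p : ℝ × ℝ | p.1 + p.2 ∈ E} := by
  change _ ↔ MeasurableSet[MeasurableSpace.generateFrom (nullMeasurableRectangles volume volume)] _
  constructor
  · exact fun hE => (measurable_fst_generateFrom_nullMeasurableRectangles.add
      measurable_snd_generateFrom_nullMeasurableRectangles) hE
  · intro h
    obtain ⟨W, hW, hsec⟩ := generateFrom_nullMeasurableRectangles_le_ofAESections _ h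
    exact measurableSet_of_ae_sections (μ := volume) hW fun t => by simpa using (hsec t).symm
end

section
/- For E ⊆ ℝ, E is Borel if and only if E' = {(x,y) : x + y ∈ E} is in the σ-algebra generated by rectangles A × B where A and B both have the property of Baire. -/
open MeasureTheory Set Filter Topology

/-- The homeomorphism `x ↦ z - x` of `ℝ`. -/
noncomputable def subLeftHomeo (z : ℝ) : ℝ ≃ₜ ℝ where
  toFun x := z - x
  invFun x := z - x
  left_inv x := sub_sub_cancel z x
  right_inv x := sub_sub_cancel z x
  continuous_toFun := continuous_const.sub continuous_id
  continuous_invFun := continuous_const.sub continuous_id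

lemma key_residual (z : ℝ) {H : Set ℝ} (hH : H ∈ residual ℝ) :
    {x : ℝ | z - x ∈ H} ∈ residual ℝ := by
  exact tendsto_residual_of_isOpenMap (subLeftHomeo z).continuous
    (subLeftHomeo z).isOpenMap hH

/-- Every set in the σ-algebra generated by rectangles with Baire measurable sides
agrees with a Borel set on a product of two measurable residual sets. -/
lemma good_rep (S : Set (ℝ × ℝ))
    (hS : MeasurableSet[MeasurableSpace.generateFrom
        {R : Set (ℝ × ℝ) | ∃ (A B : Set ℝ),
          BaireMeasurableSet A ∧ BaireMeasurableSet B ∧ R = A ×ˢ B}] S) :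
    ∃ (G H : Set ℝ) (B : Set (ℝ × ℝ)),
      G ∈ residual ℝ ∧ H ∈ residual ℝ ∧ MeasurableSet G ∧ MeasurableSet H ∧
        MeasurableSet B ∧ S ∩ (G ×ˢ H) = B ∩ (G ×ˢ H) := by
  induction hS with
  | basic t ht =>
    obtain ⟨A, B, hA, hB, rfl⟩ := ht
    obtain ⟨U, hU, hAU⟩ := hA.residualEq_isOpen
    obtain ⟨V, hV, hBV⟩ := hB.residualEq_isOpen
    have hAU' : {x | x ∈ A ↔ x ∈ U} ∈ residual ℝ := eventuallyEq_set.1 hAU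
    have hBV' : {x | x ∈ B ↔ x ∈ V} ∈ residual ℝ := eventuallyEq_set.1 hBV
    obtain ⟨G, hGsub, hGgd, hGd⟩ := mem_residual.1 hAU'
    obtain ⟨H, hHsub, hHgd, hHd⟩ := mem_residual.1 hBV'
    refine ⟨G, H, U ×ˢ V, mem_residual.2 ⟨G, subset_rfl, hGgd, hGd⟩,
      mem_residual.2 ⟨H, subset_rfl, hHgd, hHd⟩, hGgd.measurableSet, hHgd.measurableSet,
      (hU.measurableSet.prod hV.measurableSet), ?_⟩
    ext ⟨x, y⟩
    simp only [mem_inter_iff, mem_prod, and_congr_left_iff]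
    intro ⟨hx, hy⟩
    exact and_congr (hGsub hx) (hHsub hy)
  | empty =>
    exact ⟨univ, univ, ∅, univ_mem, univ_mem, MeasurableSet.univ, MeasurableSet.univ,
      MeasurableSet.empty, by simp⟩
  | compl t ht ih =>
    obtain ⟨G, H, B, hG, hH, hGm, hHm, hBm, heq⟩ := ih
    refine ⟨G, H, Bᶜ, hG, hH, hGm, hHm, hBm.compl, ?_⟩
    ext p
    have := Set.ext_iff.1 heq p
    simp only [mem_inter_iff, mem_compl_iff] at *
    tauto
  | iUnion f hf ih =>
    choose G H B hG hH hGm hHm hBm heq using ih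
    refine ⟨⋂ n, G n, ⋂ n, H n, ⋃ n, B n ∩ (G n ×ˢ H n),
      (countable_iInter_mem.2 hG), (countable_iInter_mem.2 hH),
      MeasurableSet.iInter fun n => hGm n, MeasurableSet.iInter fun n => hHm n,
      MeasurableSet.iUnion fun n => (hBm n).inter ((hGm n).prod (hHm n)), ?_⟩
    ext ⟨x, y⟩
    have hmem : ∀ n, (x, y) ∈ G n ×ˢ H n ↔ (x ∈ G n ∧ y ∈ H n) := fun n => Iff.rfl
    constructor
    · rintro ⟨hmem', hGH⟩
      simp only [mem_prod, mem_iInter] at hGH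
      obtain ⟨n, hn⟩ := mem_iUnion.1 hmem'
      have : (x, y) ∈ f n ∩ (G n ×ˢ H n) := ⟨hn, ⟨hGH.1 n, hGH.2 n⟩⟩
      rw [heq n] at this
      exact ⟨mem_iUnion.2 ⟨n, this⟩, by simp [mem_prod, mem_iInter, hGH.1, hGH.2]⟩
    · rintro ⟨hmem', hGH⟩
      simp only [mem_prod, mem_iInter] at hGH
      obtain ⟨n, hn⟩ := mem_iUnion.1 hmem'
      have : (x, y) ∈ B n ∩ (G n ×ˢ H n) := ⟨hn.1, hn.2⟩
      rw [← heq n] at this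
      exact ⟨mem_iUnion.2 ⟨n, this.1⟩, by simp [mem_prod, mem_iInter, hGH.1, hGH.2]⟩

theorem stmt_6 (E : Set ℝ) :
    MeasurableSet E ↔
      MeasurableSet[MeasurableSpace.generateFrom
        {R : Set (ℝ × ℝ) | ∃ (A B : Set ℝ),
          BaireMeasurableSet A ∧ BaireMeasurableSet B ∧ R = A ×ˢ B}]
        {p : ℝ × ℝ | p.1 + p.2 ∈ E} := by
  set gen : Set (Set (ℝ × ℝ)) := {R : Set (ℝ × ℝ) | ∃ (A B : Set ℝ),
      BaireMeasurableSet A ∧ BaireMeasurableSet B ∧ R = A ×ˢ B} with hgen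
  constructor
  · intro hE
    have hle : (Prod.instMeasurableSpace : MeasurableSpace (ℝ × ℝ)) ≤
        MeasurableSpace.generateFrom gen := by
      rw [← generateFrom_prod]
      apply MeasurableSpace.generateFrom_le
      rintro t ⟨A, hA, B, hB, rfl⟩
      have hA' : MeasurableSet A := hA
      have hB' : MeasurableSet B := hB
      exact MeasurableSpace.measurableSet_generateFrom
        ⟨A, B, hA'.baireMeasurableSet, hB'.baireMeasurableSet, rfl⟩
    exact hle _ ((measurable_fst.add measurable_snd) hE)
  · intro hS
    obtain ⟨G, H, B, hG, hH, hGm, hHm, hBm, heq⟩ := good_rep _ hS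
    set s : ℝ × ℝ → ℝ := fun p => p.1 + p.2
    have hwitness : ∀ z : ℝ, ∃ x, x ∈ G ∧ z - x ∈ H := by
      intro z
      have : G ∩ {x | z - x ∈ H} ∈ residual ℝ := inter_mem hG (key_residual z hH)
      obtain ⟨x, hx⟩ := (dense_of_mem_residual this).nonempty
      exact ⟨x, hx.1, hx.2⟩
    have hEeq : E = s '' (B ∩ (G ×ˢ H)) := by
      ext z
      constructor
      · intro hz
        obtain ⟨x, hxG, hxH⟩ := hwitness z
        have hmem : (x, z - x) ∈ {p : ℝ × ℝ | p.1 + p.2 ∈ E} ∩ (G ×ˢ H) := by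
          refine ⟨?_, hxG, hxH⟩
          simp only [mem_setOf_eq]
          simpa using hz
        rw [heq] at hmem
        exact ⟨(x, z - x), hmem, by simp [s]⟩
      · rintro ⟨⟨x, y⟩, hp, rfl⟩
        rw [← heq] at hp
        exact hp.1
    have hEceq : Eᶜ = s '' (Bᶜ ∩ (G ×ˢ H)) := by
      have heqc : {p : ℝ × ℝ | p.1 + p.2 ∈ E}ᶜ ∩ (G ×ˢ H) = Bᶜ ∩ (G ×ˢ H) := by
        ext p
        have := Set.ext_iff.1 heq p
        simp only [mem_inter_iff, mem_compl_iff] at *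
        tauto
      ext z
      constructor
      · intro hz
        obtain ⟨x, hxG, hxH⟩ := hwitness z
        have hmem : (x, z - x) ∈ {p : ℝ × ℝ | p.1 + p.2 ∈ E}ᶜ ∩ (G ×ˢ H) := by
          refine ⟨?_, hxG, hxH⟩
          simp only [mem_compl_iff, mem_setOf_eq]
          simpa using hz
        rw [heqc] at hmem
        exact ⟨(x, z - x), hmem, by simp [s]⟩
      · rintro ⟨⟨x, y⟩, hp, rfl⟩
        rw [← heqc] at hp
        exact hp.1
    have hcont : Continuous s := continuous_fst.add continuous_snd
    have hEa : AnalyticSet E := by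
      rw [hEeq]
      exact ((hBm.inter (hGm.prod hHm)).analyticSet).image_of_continuous hcont
    have hEca : AnalyticSet Eᶜ := by
      rw [hEceq]
      exact ((hBm.compl.inter (hGm.prod hHm)).analyticSet).image_of_continuous hcont
    exact hEa.measurableSet_of_compl hEca
end

section
/- If E ⊆ ℝ is Lebesgue measurable but not Borel, then E' = {(x,y) : x + y ∈ E} is not in the σ-algebra generated by rectangles with Lebesgue measurable sides. -/
open MeasureTheory Set
open scoped symmDiff ENNReal

/-- Sets that agree with a Borel set on a product of two Borel conull sets form a σ-algebra. -/
def stmt7Aux : MeasurableSpace (ℝ × ℝ) where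
  MeasurableSet' T := ∃ (W : Set (ℝ × ℝ)) (X Y : Set ℝ),
    MeasurableSet W ∧ MeasurableSet X ∧ MeasurableSet Y ∧
    volume Xᶜ = 0 ∧ volume Yᶜ = 0 ∧ ∀ p ∈ X ×ˢ Y, (p ∈ T ↔ p ∈ W)
  measurableSet_empty :=
    ⟨∅, univ, univ, MeasurableSet.empty, .univ, .univ, by simp, by simp, by simp⟩
  measurableSet_compl := by
    rintro T ⟨W, X, Y, hW, hX, hY, hXn, hYn, h⟩
    exact ⟨Wᶜ, X, Y, hW.compl, hX, hY, hXn, hYn, fun p hp => by simp [h p hp]⟩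
  measurableSet_iUnion := by
    intro f hf
    choose W X Y hW hX hY hXn hYn h using hf
    refine ⟨⋃ n, W n, ⋂ n, X n, ⋂ n, Y n, MeasurableSet.iUnion hW,
      MeasurableSet.iInter hX, MeasurableSet.iInter hY, ?_, ?_, ?_⟩
    · rw [compl_iInter]; exact measure_iUnion_null hXn
    · rw [compl_iInter]; exact measure_iUnion_null hYn
    · rintro p ⟨hp1, hp2⟩
      simp only [mem_iInter] at hp1 hp2
      simp only [mem_iUnion]
      exact exists_congr fun n => h n p ⟨hp1 n, hp2 n⟩

theorem stmt_7 (E : Set ℝ)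
    (hmeas : NullMeasurableSet E (volume : Measure ℝ))
    (hnb : ¬ MeasurableSet E) :
    ¬ MeasurableSet[MeasurableSpace.generateFrom
        {R : Set (ℝ × ℝ) | ∃ (A B : Set ℝ),
          NullMeasurableSet A (volume : Measure ℝ) ∧
          NullMeasurableSet B (volume : Measure ℝ) ∧ R = A ×ˢ B}]
        {p : ℝ × ℝ | p.1 + p.2 ∈ E} := by
  intro hE'
  -- every generator is in stmt7Aux
  have hgen : ∀ R ∈ {R : Set (ℝ × ℝ) | ∃ (A B : Set ℝ),
      NullMeasurableSet A (volume : Measure ℝ) ∧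
      NullMeasurableSet B (volume : Measure ℝ) ∧ R = A ×ˢ B},
      MeasurableSet[stmt7Aux] R := by
    rintro R ⟨A, B, hA, hB, rfl⟩
    obtain ⟨A', hAA', hA', hA'A⟩ := hA.exists_measurable_superset_ae_eq
    obtain ⟨B', hBB', hB', hB'B⟩ := hB.exists_measurable_superset_ae_eq
    -- X := complement of a measurable null superset of A ∆ A'
    have hAd : volume (A' ∆ A) = 0 := measure_symmDiff_eq_zero_iff.2 hA'A
    have hBd : volume (B' ∆ B) = 0 := measure_symmDiff_eq_zero_iff.2 hB'B
    refine ⟨A' ×ˢ B', (toMeasurable volume (A' ∆ A))ᶜ, (toMeasurable volume (B' ∆ B))ᶜ,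
      hA'.prod hB', (measurableSet_toMeasurable _ _).compl,
      (measurableSet_toMeasurable _ _).compl, ?_, ?_, ?_⟩
    · rw [compl_compl, measure_toMeasurable]; exact hAd
    · rw [compl_compl, measure_toMeasurable]; exact hBd
    · rintro ⟨x, y⟩ ⟨hx, hy⟩
      have hx' : x ∉ A' ∆ A := fun h => hx (subset_toMeasurable _ _ h)
      have hy' : y ∉ B' ∆ B := fun h => hy (subset_toMeasurable _ _ h)
      simp only [Set.mem_symmDiff, not_or, not_and, not_not] at hx' hy'
      constructor
      · rintro ⟨ha, hb⟩; exact ⟨by tauto, by tauto⟩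
      · rintro ⟨ha, hb⟩; exact ⟨by tauto, by tauto⟩
  -- hence E' is in stmt7Aux
  obtain ⟨W, X, Y, hW, hX, hY, hXn, hYn, h⟩ :=
    (MeasurableSpace.generateFrom_le hgen) _ hE'
  -- the slice map
  set V : Set (ℝ × ℝ) := {q : ℝ × ℝ | q.2 ∈ Icc (0:ℝ) 1 ∧ (q.2, q.1 - q.2) ∈ W} with hV
  have hVmeas : MeasurableSet V := by
    apply MeasurableSet.inter
    · exact measurable_snd measurableSet_Icc
    · exact (measurable_snd.prodMk (measurable_fst.sub measurable_snd)) hW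
  set F : ℝ → ℝ≥0∞ := fun t => volume (Prod.mk t ⁻¹' V) with hF
  have hFmeas : Measurable F := measurable_measure_prodMk_left hVmeas
  -- for each t, the good set of x's is conull in [0,1]
  have key : ∀ t : ℝ, (t ∈ E ↔ F t = 1) := by
    intro t
    have hpre : volume ((fun x => t - x) ⁻¹' Yᶜ) = 0 := by
      rw [(Measure.measurePreserving_sub_left volume t).measure_preimage
        hY.compl.nullMeasurableSet]
      exact hYn
    have hsec : Prod.mk t ⁻¹' V = {x | x ∈ Icc (0:ℝ) 1 ∧ (x, t - x) ∈ W} := rfl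
    constructor
    · intro ht
      have hsub : Icc (0:ℝ) 1 ∩ (X ∩ (fun x => t - x) ⁻¹' Y) ⊆ Prod.mk t ⁻¹' V := by
        rintro x ⟨hx01, hxX, hxY⟩
        refine ⟨hx01, ?_⟩
        have := (h (x, t - x) ⟨hxX, hxY⟩).1
        simp only [mem_setOf_eq] at this
        exact this (by simpa using ht)
      have h1 : volume (Icc (0:ℝ) 1 ∩ (X ∩ (fun x => t - x) ⁻¹' Y)) = 1 := by
        rw [← inter_assoc, measure_inter_conull, measure_inter_conull hXn]
        · simp [Real.volume_Icc]
        · simpa [compl_eq_univ_diff] using hpre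
      have hle1 : F t ≤ 1 := by
        calc F t ≤ volume (Icc (0:ℝ) 1) := by
              apply measure_mono; intro x hx; exact hx.1
          _ = 1 := by simp [Real.volume_Icc]
      have hge1 : (1:ℝ≥0∞) ≤ F t := h1 ▸ measure_mono hsub
      exact le_antisymm hle1 hge1
    · intro hFt
      by_contra ht
      have hsub : Prod.mk t ⁻¹' V ⊆ Xᶜ ∪ (fun x => t - x) ⁻¹' Yᶜ := by
        rintro x ⟨hx01, hxW⟩
        by_contra hxc
        simp only [mem_union, mem_compl_iff, mem_preimage, not_or, not_not] at hxc
        obtain ⟨hxX, hxY⟩ := hxc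
        have := (h (x, t - x) ⟨hxX, hxY⟩).2 hxW
        simp only [mem_setOf_eq] at this
        exact ht (by simpa using this)
      have : F t = 0 := by
        refine measure_mono_null hsub ?_
        exact measure_union_null hXn hpre
      rw [this] at hFt
      exact one_ne_zero hFt.symm
  have : E = F ⁻¹' {1} := by ext t; simpa using key t
  exact hnb (this ▸ hFmeas (measurableSet_singleton 1))
end

section
/- If G ⊆ ℝ is a Gδ set containing all rationals, and h : ℝ \ ℚ → ω^ω is a homeomorphism from the irrationals onto Baire space, then there exists f ∈ ω^ω such that for every g ∈ ω^ω with g ≥* f one has h⁻¹(g) ∈ G. -/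
/-!
The complement of `G` is an `F_σ` set of irrationals, hence σ-compact both in `ℝ` and in the
irrationals, so its image under `h` is a countable union of compact subsets `K i` of Baire space.
A compact subset of Baire space is bounded pointwise by some `b i`, and any `f` eventually
strictly above every `b i` (e.g. `f n = max_{i ≤ n} b i n + 1`) keeps all `g ≥* f` out of the
image of `Gᶜ`.
-/

open Set Filter

lemma IsCompact.bddAbove_pi {ι : Type*} {π : ι → Type*} [∀ i, TopologicalSpace (π i)]
    [∀ i, LinearOrder (π i)] [∀ i, ClosedIciTopology (π i)] [∀ i, Nonempty (π i)]
    {K : Set (∀ i, π i)} (hK : IsCompact K) : BddAbove K :=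
  _root_.bddAbove_pi.2 fun i => (hK.image (continuous_apply i)).bddAbove

lemma exists_forall_eventually_lt (b : ℕ → ℕ → ℕ) :
    ∃ f : ℕ → ℕ, ∀ i, ∀ᶠ n in atTop, b i n < f n :=
  ⟨fun n => (Finset.range (n + 1)).sup (fun i => b i n) + 1, fun i =>
    eventually_atTop.2 ⟨i, fun _ hn => Nat.lt_succ_of_le <|
      Finset.le_sup (f := fun i => b i _) (Finset.mem_range.2 (Nat.lt_succ_of_le hn))⟩⟩

lemma IsSigmaCompact.exists_forall_eventually_le_notMem {A : Set (ℕ → ℕ)}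
    (hA : IsSigmaCompact A) : ∃ f : ℕ → ℕ, ∀ g, (∀ᶠ n in atTop, f n ≤ g n) → g ∉ A := by
  obtain ⟨K, hK, rfl⟩ := hA
  choose b hb using fun i => (hK i).bddAbove_pi
  obtain ⟨f, hf⟩ := exists_forall_eventually_lt b
  refine ⟨f, fun g hg hgK => ?_⟩
  obtain ⟨i, hi⟩ := mem_iUnion.1 hgK
  obtain ⟨n, hfg, hbf⟩ := (hg.and (hf i)).exists
  exact (hb i hi n).not_gt (hbf.trans_le hfg)

lemma IsGδ.isSigmaCompact_compl {X : Type*} [TopologicalSpace X] [SigmaCompactSpace X]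
    {G : Set X} (hG : IsGδ G) : IsSigmaCompact Gᶜ := by
  obtain ⟨S, hSopen, hScount, rfl⟩ := hG
  rw [compl_sInter, sUnion_image]
  exact isSigmaCompact_biUnion hScount fun s hs =>
    isSigmaCompact_univ.of_isClosed_subset (hSopen s hs).isClosed_compl (subset_univ _)

lemma IsSigmaCompact.preimage_val {X : Type*} [TopologicalSpace X] {p : X → Prop} {s : Set X}
    (hs : IsSigmaCompact s) (hsp : ∀ x ∈ s, p x) :
    IsSigmaCompact (Subtype.val ⁻¹' s : Set {x // p x}) := by
  rwa [Subtype.isSigmaCompact_iff, image_preimage_eq_of_subset fun x hx => ⟨⟨x, hsp x hx⟩, rfl⟩]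

theorem stmt_12 (G : Set ℝ) (hG : IsGδ G) (hQ : ∀ q : ℚ, (q : ℝ) ∈ G)
    (h : {x : ℝ // Irrational x} ≃ₜ (ℕ → ℕ)) :
    ∃ f : ℕ → ℕ, ∀ g : ℕ → ℕ, (∀ᶠ n in atTop, f n ≤ g n) →
      (h.symm g : ℝ) ∈ G := by
  have hGc : IsSigmaCompact (Subtype.val ⁻¹' Gᶜ : Set {x : ℝ // Irrational x}) :=
    hG.isSigmaCompact_compl.preimage_val fun x hx ⟨q, hq⟩ => hx (hq ▸ hQ q)
  obtain ⟨f, hf⟩ := (hGc.image h.continuous).exists_forall_eventually_le_notMem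
  exact ⟨f, fun g hg => by_contra fun hgG => hf g hg ⟨h.symm g, hgG, h.apply_symm_apply g⟩⟩
end

section
/- There exists an analytic set E ⊆ ℝ such that for every meager set Z ⊆ ℝ there exists x ∈ ℝ such that E \ (x + Z) is not Borel. -/
/-!
A non-Borel analytic set `D ⊆ 2^ℕ` comes from diagonalising a universal analytic set: `c ∈ 2^ℕ`
codes the closed set of all sequences whose prefixes all have their codes marked by `c`, and every
closed set of sequences has a code.

The map `cantorCode (u, a)` writes the bits of `a` as ternary digits `1, 2` at places whose gaps are
`u`; it is continuous and injective, and `E = cantorCode (ℕ^ℕ × D)`. Given a meagre `Z`, Baire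
category in `ℕ^ℕ × ℝ` yields `(u, x)` with `cantorCode ({u} × 2^ℕ)` disjoint from `x + Z`: for
closed nowhere dense `F`, the parameters with `cantorCode ({u} × 2^ℕ) - x` meeting `F` form a closed
set (`2^ℕ` is compact) with empty interior, because enlarging the gap `u k` squeezes
`cantorCode ({u} × 2^ℕ)` into `2^k` arbitrarily short intervals. Then `E \ (x + Z)` meets that
Cantor set exactly in the image of `D`, so its Borelness would make `D` Borel.
-/

open MeasureTheory Set Pointwise Topology PiNat Encodable

instance : PolishSpace Bool := {}

theorem isLocallyConstant_res {β : Type*} [TopologicalSpace β] [DiscreteTopology β] (n : ℕ) :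
    IsLocallyConstant fun w : ℕ → β => res w n := by
  refine (IsLocallyConstant.iff_eventually_eq _).2 fun w => ?_
  filter_upwards [(isOpen_cylinder _ w n).mem_nhds (self_mem_cylinder w n)] with v hv
  exact res_eq_res.2 (mem_cylinder_iff.1 hv)

section Coding

variable {β : Type*} [Encodable β]

def codedSet (c : ℕ → Bool) : Set (ℕ → β) := {w | ∀ n, c (encode (res w n)) = true}

variable [TopologicalSpace β] [DiscreteTopology β]

theorem continuous_apply_encode_res (n : ℕ) :
    Continuous fun p : (ℕ → Bool) × (ℕ → β) => p.1 (encode (res p.2 n)) := by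
  refine continuous_iff_continuousAt.2 fun p => ?_
  have hres : ∀ᶠ q in 𝓝 p, res q.2 n = res p.2 n := continuousAt_snd.eventually
    ((IsLocallyConstant.iff_eventually_eq _).1 (isLocallyConstant_res n) p.2)
  refine ((continuous_apply (encode (res p.2 n))).comp continuous_fst).continuousAt.congr ?_
  filter_upwards [hres] with q hq
  simp [hq]

theorem isClosed_setOf_mem_codedSet :
    IsClosed {p : (ℕ → Bool) × (ℕ → β) | p.2 ∈ codedSet p.1} := by
  show IsClosed {p : (ℕ → Bool) × (ℕ → β) | ∀ n, p.1 (encode (res p.2 n)) = true}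
  rw [ofPred_forall]
  exact isClosed_iInter fun n =>
    isClosed_eq (continuous_apply_encode_res (β := β) n) continuous_const

/-- The code marks the codes of all prefixes of elements of `F`. -/
theorem exists_codedSet_eq {F : Set (ℕ → β)} (hF : IsClosed F) : ∃ c, codedSet c = F := by
  classical
  refine ⟨fun m => decide (∃ w ∈ F, ∃ n, encode (res w n) = m), Set.ext fun w => ?_⟩
  simp only [codedSet, mem_ofPred_eq, decide_eq_true_eq, encode_inj]
  constructor
  · intro h
    by_contra hw
    obtain ⟨n, hn⟩ := exists_disjoint_cylinder hF hw
    obtain ⟨v, hv, m, hvm⟩ := h n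
    have hmn : m = n := by simpa [res_length] using congrArg List.length hvm
    subst hmn
    exact hn.notMem_of_mem_left hv (mem_cylinder_iff.2 fun i hi => (res_eq_res.1 hvm hi))
  · exact fun hw n => ⟨w, hw, n, rfl⟩

end Coding

/-- The diagonal of the universal analytic set `{(c, z) | ∃ y, (z, y) ∈ codedSet c}`. -/
def diagonalSet : Set (ℕ → Bool) := {c | ∃ y : ℕ → ℕ, (fun i => (c i, y i)) ∈ codedSet c}

theorem analyticSet_diagonalSet : AnalyticSet diagonalSet := by
  have hF : IsClosed {p : (ℕ → Bool) × (ℕ → ℕ) | (fun i => (p.1 i, p.2 i)) ∈ codedSet p.1} :=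
    isClosed_setOf_mem_codedSet.preimage
      (f := fun p : (ℕ → Bool) × (ℕ → ℕ) => (p.1, fun i => (p.1 i, p.2 i))) (by fun_prop)
  convert hF.analyticSet.image_of_continuous continuous_fst
  ext c
  simp [diagonalSet]

theorem MeasureTheory.AnalyticSet.exists_isClosed_forall_mem_iff {α : Type*} [TopologicalSpace α]
    [DiscreteTopology α] {s : Set (ℕ → α)} (hs : AnalyticSet s) :
    ∃ F : Set (ℕ → α × ℕ), IsClosed F ∧ ∀ z, z ∈ s ↔ ∃ y : ℕ → ℕ, (fun i => (z i, y i)) ∈ F := by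
  rw [AnalyticSet] at hs
  rcases hs with rfl | ⟨g, hg, rfl⟩
  · exact ⟨∅, isClosed_empty, by simp⟩
  · refine ⟨{w | g (fun i => (w i).2) = fun i => (w i).1},
      isClosed_eq (by fun_prop) (by fun_prop), fun z => ?_⟩
    simp

theorem not_measurableSet_diagonalSet : ¬ MeasurableSet diagonalSet := by
  intro h
  obtain ⟨F, hF, hmem⟩ := h.compl.analyticSet.exists_isClosed_forall_mem_iff
  obtain ⟨c, rfl⟩ := exists_codedSet_eq hF
  exact iff_not_self (hmem c).symm

def digitVal (b : Bool) : ℝ := if b then 2 else 1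

@[simp] theorem digitVal_true : digitVal true = 2 := rfl

@[simp] theorem digitVal_false : digitVal false = 1 := rfl

theorem one_le_digitVal (b : Bool) : 1 ≤ digitVal b := by cases b <;> norm_num [digitVal]

theorem digitVal_le_two (b : Bool) : digitVal b ≤ 2 := by cases b <;> norm_num [digitVal]

theorem digitVal_pos (b : Bool) : 0 < digitVal b := by linarith [one_le_digitVal b]

noncomputable def digitSum (s : ℕ → ℕ) (d : ℕ → Bool) : ℝ := ∑' i, digitVal (d i) * 3⁻¹ ^ s i

theorem inv_three_pow_le_of_le {m n : ℕ} (h : m ≤ n) : (3⁻¹ : ℝ) ^ n ≤ 3⁻¹ ^ m :=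
  pow_le_pow_of_le_one (by norm_num) (by norm_num) h

theorem eq_of_mem_Icc_digitVal {v : ℝ} {m m' : ℕ} {b b' : Bool}
    (hv : v ∈ Icc (digitVal b * 3⁻¹ ^ m) ((digitVal b + 1 / 4) * 3⁻¹ ^ m))
    (hv' : v ∈ Icc (digitVal b' * 3⁻¹ ^ m') ((digitVal b' + 1 / 4) * 3⁻¹ ^ m')) :
    m = m' ∧ b = b' := by
  have hsep : ∀ {m m' : ℕ} {b b' : Bool}, m < m' →
      v ∈ Icc (digitVal b * 3⁻¹ ^ m) ((digitVal b + 1 / 4) * 3⁻¹ ^ m) →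
      v ∉ Icc (digitVal b' * 3⁻¹ ^ m') ((digitVal b' + 1 / 4) * 3⁻¹ ^ m') := by
    intro m m' b b' hlt hv hv'
    have hpow : (3⁻¹ : ℝ) ^ m' ≤ 3⁻¹ ^ (m + 1) := inv_three_pow_le_of_le hlt
    have := one_le_digitVal b
    have := digitVal_le_two b'
    have := pow_pos (by norm_num : (0 : ℝ) < 3⁻¹) m
    rw [pow_succ] at hpow
    nlinarith [hv.1, hv'.2, pow_pos (by norm_num : (0 : ℝ) < 3⁻¹) m']
  obtain rfl : m = m' := by
    rcases lt_trichotomy m m' with h | h | h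
    · exact absurd hv' (hsep h hv)
    · exact h
    · exact absurd hv (hsep h hv')
  refine ⟨rfl, ?_⟩
  have := pow_pos (by norm_num : (0 : ℝ) < 3⁻¹) m
  cases b <;> cases b' <;> simp only [digitVal_true, digitVal_false, mem_Icc] at hv hv' <;>
    first | rfl | (exfalso; nlinarith [hv.1, hv.2, hv'.1, hv'.2])

section DigitSum

variable {s s' : ℕ → ℕ} {d d' : ℕ → Bool}

theorem add_two_mul_le_of_forall_add_two_le (hs : ∀ i, s i + 2 ≤ s (i + 1)) (i : ℕ) :
    s 0 + 2 * i ≤ s i := by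
  induction i with
  | zero => simp
  | succ i ih => linarith [hs i]

theorem digitVal_mul_le (hs : ∀ i, s i + 2 ≤ s (i + 1)) (i : ℕ) :
    digitVal (d i) * 3⁻¹ ^ s i ≤ 2 * 3⁻¹ ^ s 0 * 9⁻¹ ^ i := by
  have hpow : (3⁻¹ : ℝ) ^ s i ≤ 3⁻¹ ^ s 0 * 9⁻¹ ^ i := by
    calc (3⁻¹ : ℝ) ^ s i ≤ 3⁻¹ ^ (s 0 + 2 * i) :=
          inv_three_pow_le_of_le (add_two_mul_le_of_forall_add_two_le hs i)
      _ = 3⁻¹ ^ s 0 * 9⁻¹ ^ i := by rw [pow_add, pow_mul]; norm_num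
  calc digitVal (d i) * 3⁻¹ ^ s i ≤ 2 * (3⁻¹ ^ s 0 * 9⁻¹ ^ i) :=
        mul_le_mul (digitVal_le_two _) hpow (by positivity) (by norm_num)
    _ = 2 * 3⁻¹ ^ s 0 * 9⁻¹ ^ i := by ring

theorem summable_digitVal_mul (hs : ∀ i, s i + 2 ≤ s (i + 1)) :
    Summable fun i => digitVal (d i) * 3⁻¹ ^ s i :=
  Summable.of_nonneg_of_le (fun i => by have := digitVal_pos (d i); positivity)
    (digitVal_mul_le hs) ((summable_geometric_of_lt_one (by norm_num) (by norm_num)).mul_left _)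

theorem digitSum_nonneg : 0 ≤ digitSum s d :=
  tsum_nonneg fun i => by have := digitVal_pos (d i); positivity

theorem digitSum_le (hs : ∀ i, s i + 2 ≤ s (i + 1)) : digitSum s d ≤ 9 / 4 * 3⁻¹ ^ s 0 := by
  calc digitSum s d ≤ ∑' i : ℕ, 2 * 3⁻¹ ^ s 0 * (9⁻¹ : ℝ) ^ i :=
        Summable.tsum_le_tsum (digitVal_mul_le hs) (summable_digitVal_mul hs)
          ((summable_geometric_of_lt_one (by norm_num) (by norm_num)).mul_left _)
    _ = 9 / 4 * 3⁻¹ ^ s 0 := by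
        rw [tsum_mul_left, tsum_geometric_of_lt_one (by norm_num) (by norm_num)]
        ring

theorem digitSum_eq_add (hs : ∀ i, s i + 2 ≤ s (i + 1)) :
    digitSum s d =
      digitVal (d 0) * 3⁻¹ ^ s 0 + digitSum (fun i => s (i + 1)) (fun i => d (i + 1)) :=
  (summable_digitVal_mul hs).tsum_eq_zero_add

theorem digitSum_mem_Icc (hs : ∀ i, s i + 2 ≤ s (i + 1)) :
    digitSum s d ∈ Icc (digitVal (d 0) * 3⁻¹ ^ s 0) ((digitVal (d 0) + 1 / 4) * 3⁻¹ ^ s 0) := by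
  have htail := digitSum_le (d := fun i => d (i + 1)) fun i => hs (i + 1)
  have hpow : (3⁻¹ : ℝ) ^ s 1 ≤ 3⁻¹ ^ s 0 / 9 := by
    calc (3⁻¹ : ℝ) ^ s 1 ≤ 3⁻¹ ^ (s 0 + 2) := inv_three_pow_le_of_le (hs 0)
      _ = 3⁻¹ ^ s 0 / 9 := by rw [pow_add]; norm_num; ring
  rw [digitSum_eq_add hs]
  constructor <;> nlinarith [digitSum_nonneg (s := fun i => s (i + 1)) (d := fun i => d (i + 1))]

theorem eq_of_digitSum_eq (hs : ∀ i, s i + 2 ≤ s (i + 1)) (hs' : ∀ i, s' i + 2 ≤ s' (i + 1))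
    (h : digitSum s d = digitSum s' d') : s = s' ∧ d = d' := by
  suffices ∀ i, ∀ {s s' : ℕ → ℕ} {d d' : ℕ → Bool}, (∀ i, s i + 2 ≤ s (i + 1)) →
      (∀ i, s' i + 2 ≤ s' (i + 1)) → digitSum s d = digitSum s' d' → s i = s' i ∧ d i = d' i from
    ⟨funext fun i => (this i hs hs' h).1, funext fun i => (this i hs hs' h).2⟩
  intro i
  induction i with
  | zero =>
    intro s s' d d' hs hs' h
    exact eq_of_mem_Icc_digitVal (digitSum_mem_Icc hs) (h ▸ digitSum_mem_Icc hs')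
  | succ i ih =>
    intro s s' d d' hs hs' h
    obtain ⟨h0, hd0⟩ := eq_of_mem_Icc_digitVal (digitSum_mem_Icc hs) (h ▸ digitSum_mem_Icc hs')
    refine ih (d := fun i => d (i + 1)) (d' := fun i => d' (i + 1))
      (fun i => hs (i + 1)) (fun i => hs' (i + 1)) ?_
    rw [digitSum_eq_add hs, digitSum_eq_add hs', h0, hd0] at h
    exact add_left_cancel h

end DigitSum

def gapPos (u : ℕ → ℕ) (i : ℕ) : ℕ := ∑ j ∈ Finset.range (i + 1), (u j + 2)

section GapPos

variable (u : ℕ → ℕ)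

theorem gapPos_succ (i : ℕ) : gapPos u (i + 1) = gapPos u i + (u (i + 1) + 2) :=
  Finset.sum_range_succ _ _

theorem gapPos_add_two_le (i : ℕ) : gapPos u i + 2 ≤ gapPos u (i + 1) := by
  rw [gapPos_succ]; omega

theorem le_gapPos (i : ℕ) : u i ≤ gapPos u i :=
  (Nat.le_add_right _ _).trans
    (Finset.single_le_sum (f := fun j => u j + 2) (fun _ _ => Nat.zero_le _) (by simp))

theorem gapPos_congr {v : ℕ → ℕ} {i : ℕ} (h : ∀ j ≤ i, u j = v j) : gapPos u i = gapPos v i :=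
  Finset.sum_congr rfl fun j hj => by rw [h j (Nat.lt_succ_iff.1 (Finset.mem_range.1 hj))]

theorem gapPos_injective : Function.Injective gapPos := by
  intro u v h
  funext i
  cases i with
  | zero => simpa [gapPos] using congrFun h 0
  | succ i => have := congrFun h (i + 1); rw [gapPos_succ, gapPos_succ, congrFun h i] at this; omega

theorem continuous_gapPos (i : ℕ) : Continuous fun u : ℕ → ℕ => gapPos u i :=
  continuous_finsetSum _ fun j _ => by fun_prop

end GapPos

noncomputable def cantorCode (p : (ℕ → ℕ) × (ℕ → Bool)) : ℝ := digitSum (gapPos p.1) p.2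

theorem cantorCode_injective : Function.Injective cantorCode := fun p q h => by
  obtain ⟨hpos, hd⟩ := eq_of_digitSum_eq (gapPos_add_two_le p.1) (gapPos_add_two_le q.1) h
  exact Prod.ext (gapPos_injective hpos) hd

theorem continuous_cantorCode : Continuous cantorCode := by
  refine continuous_tsum (u := fun i => 2 * (9⁻¹ : ℝ) ^ i) (fun i => ?_)
    ((summable_geometric_of_lt_one (by norm_num) (by norm_num)).mul_left _) fun i p => ?_
  · exact continuous_of_discreteTopology (f := fun q : ℕ × Bool => digitVal q.2 * 3⁻¹ ^ q.1).comp
      (((continuous_gapPos i).comp continuous_fst).prodMk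
        ((continuous_apply i).comp continuous_snd))
  · have hle := digitVal_mul_le (d := p.2) (gapPos_add_two_le p.1) i
    have hpow : (3⁻¹ : ℝ) ^ gapPos p.1 0 ≤ 1 := pow_le_one₀ (by norm_num) (by norm_num)
    rw [Real.norm_of_nonneg (by have := digitVal_pos (p.2 i); positivity)]
    nlinarith [pow_pos (by norm_num : (0 : ℝ) < 9⁻¹) i]

noncomputable def headSum (u : ℕ → ℕ) (k : ℕ) (c : Fin k → Bool) : ℝ :=
  ∑ i : Fin k, digitVal (c i) * 3⁻¹ ^ gapPos u i

theorem cantorCode_eq_headSum_add (u : ℕ → ℕ) (a : ℕ → Bool) (k : ℕ) :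
    cantorCode (u, a) = headSum u k (fun i => a i) +
      digitSum (fun i => gapPos u (i + k)) (fun i => a (i + k)) := by
  rw [headSum, Fin.sum_univ_eq_sum_range (fun i => digitVal (a i) * 3⁻¹ ^ gapPos u i)]
  exact ((summable_digitVal_mul (gapPos_add_two_le u)).sum_add_tsum_nat_add k).symm

theorem headSum_update (u : ℕ → ℕ) (k N : ℕ) : headSum (Function.update u k N) k = headSum u k := by
  funext c
  refine Finset.sum_congr rfl fun i _ => ?_
  rw [gapPos_congr _ fun j hj => Function.update_of_ne (by omega) _ _]

theorem digitSum_gapPos_tail_le (u : ℕ → ℕ) (a : ℕ → Bool) (k : ℕ) :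
    digitSum (fun i => gapPos u (i + k)) (fun i => a (i + k)) ≤ 9 / 4 * 3⁻¹ ^ u k := by
  refine (digitSum_le fun i => ?_).trans ?_
  · simpa [Nat.add_right_comm] using gapPos_add_two_le u (i + k)
  · simpa using inv_three_pow_le_of_le (le_gapPos u k)

theorem PiNat.exists_cylinder_subset {E : ℕ → Type*} [∀ n, TopologicalSpace (E n)]
    [∀ n, DiscreteTopology (E n)] {x : ∀ n, E n} {U : Set (∀ n, E n)} (hU : U ∈ 𝓝 x) :
    ∃ n, PiNat.cylinder x n ⊆ U := by
  obtain ⟨t, ⟨y, n, rfl⟩, hxt, htU⟩ := (PiNat.isTopologicalBasis_cylinders E).mem_nhds_iff.1 hU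
  exact ⟨n, PiNat.mem_cylinder_iff_eq.1 hxt ▸ htU⟩

section Avoidance

variable {F : Set ℝ}

def hitSet (F : Set ℝ) : Set ((ℕ → ℕ) × ℝ) := {p | ∃ a, cantorCode (p.1, a) - p.2 ∈ F}

/-- Projection along the compact factor `ℕ → Bool` is a closed map. -/
theorem isClosed_hitSet (hF : IsClosed F) : IsClosed (hitSet F) := by
  have hcont : Continuous fun q : ((ℕ → ℕ) × ℝ) × (ℕ → Bool) => cantorCode (q.1.1, q.2) - q.1.2 :=
    (continuous_cantorCode.comp (continuous_fst.fst.prodMk continuous_snd)).sub continuous_fst.snd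
  convert isClosedMap_fst_of_compactSpace _ (hF.preimage hcont)
  ext p
  simp [hitSet]

theorem exists_update_forall_sub_notMem (hF : IsClosed F) (hF' : IsNowhereDense F)
    (u : ℕ → ℕ) (k : ℕ) {W : Set ℝ} (hW : IsOpen W) (hne : W.Nonempty) :
    ∃ N, ∃ y ∈ W, ∀ a, cantorCode (Function.update u k N, a) - y ∉ F := by
  set G := ⋂ c : Fin k → Bool, (fun v => headSum u k c - v) ⁻¹' Fᶜ
  have hGo : IsOpen G := isOpen_iInter_of_finite fun c =>
    hF.isOpen_compl.preimage (continuous_const.sub continuous_id)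
  have hFd : Dense Fᶜ := interior_eq_empty_iff_dense_compl.1 (hF.isNowhereDense_iff.1 hF')
  have hGd : Dense G := dense_iInter_of_isOpen
    (fun c => hF.isOpen_compl.preimage (continuous_const.sub continuous_id))
    (fun c => hFd.preimage (isOpenMap_sub_left _))
  obtain ⟨y, hyW, hyG⟩ := hGd.inter_open_nonempty W hW hne
  obtain ⟨ε, hε, hball⟩ := Metric.isOpen_iff.1 hGo y hyG
  obtain ⟨N, hN⟩ := exists_pow_lt_of_lt_one (by positivity : 0 < 4 / 9 * ε)
    (by norm_num : (3⁻¹ : ℝ) < 1)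
  refine ⟨N, y, hyW, fun a ha => ?_⟩
  set t := digitSum (fun i => gapPos (Function.update u k N) (i + k)) (fun i => a (i + k))
  have ht : t < ε := by
    have := digitSum_gapPos_tail_le (Function.update u k N) a k
    rw [Function.update_self] at this
    linarith
  have hyt : y - t ∈ G := hball (by
    rw [Metric.mem_ball, Real.dist_eq, abs_lt]
    constructor <;> linarith [digitSum_nonneg (s := fun i => gapPos (Function.update u k N) (i + k))
      (d := fun i => a (i + k))])
  refine mem_iInter.1 hyt (fun i => a i) ?_
  rw [cantorCode_eq_headSum_add _ _ k, headSum_update] at ha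
  simpa only [mem_preimage, sub_sub_eq_add_sub] using ha

theorem isNowhereDense_hitSet (hF : IsClosed F) (hF' : IsNowhereDense F) :
    IsNowhereDense (hitSet F) := by
  rw [(isClosed_hitSet hF).isNowhereDense_iff, interior_eq_empty_iff_dense_compl,
    dense_iff_inter_open]
  rintro O hO ⟨⟨u, x⟩, hux⟩
  obtain ⟨U, hU, W, hW, hUW⟩ := mem_nhds_prod_iff.1 (hO.mem_nhds hux)
  obtain ⟨k, hk⟩ := PiNat.exists_cylinder_subset hU
  obtain ⟨W', hW'W, hW'o, hxW'⟩ := mem_nhds_iff.1 hW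
  obtain ⟨N, y, hy, hyF⟩ := exists_update_forall_sub_notMem hF hF' u k hW'o ⟨x, hxW'⟩
  exact ⟨(Function.update u k N, y), hUW ⟨hk (PiNat.update_mem_cylinder u k N), hW'W hy⟩,
    fun ⟨a, ha⟩ => hyF a ha⟩

end Avoidance

theorem exists_forall_cantorCode_notMem_vadd {Z : Set ℝ} (hZ : IsMeagre Z) :
    ∃ (u : ℕ → ℕ) (x : ℝ), ∀ a, cantorCode (u, a) ∉ x +ᵥ Z := by
  obtain ⟨S, hSnd, hSc, hZS⟩ := isMeagre_iff_countable_union_isNowhereDense.1 hZ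
  have hmeagre : IsMeagre (⋃ t ∈ S, hitSet (closure t)) := isMeagre_biUnion hSc fun t ht =>
    (isNowhereDense_hitSet isClosed_closure (hSnd t ht).closure).isMeagre
  obtain ⟨⟨u, x⟩, hux⟩ : (⋃ t ∈ S, hitSet (closure t))ᶜ.Nonempty := by
    by_contra h
    rw [not_nonempty_iff_eq_empty, compl_empty_iff] at h
    exact not_isMeagre_of_isOpen isOpen_univ univ_nonempty (h ▸ hmeagre)
  refine ⟨u, x, fun a ha => hux ?_⟩
  rw [mem_vadd_set_iff_neg_vadd_mem, vadd_eq_add, neg_add_eq_sub] at ha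
  obtain ⟨t, ht, hat⟩ := mem_sUnion.1 (hZS ha)
  exact mem_biUnion ht ⟨a, subset_closure hat⟩

theorem stmt_15 :
    ∃ E : Set ℝ, AnalyticSet E ∧
      ∀ Z : Set ℝ, IsMeagre Z →
        ∃ x : ℝ, ¬ MeasurableSet (E \ (x +ᵥ Z)) := by
  refine ⟨cantorCode '' (Prod.snd ⁻¹' diagonalSet),
    (analyticSet_diagonalSet.preimage continuous_snd).image_of_continuous continuous_cantorCode,
    fun Z hZ => ?_⟩
  obtain ⟨u, x, hux⟩ := exists_forall_cantorCode_notMem_vadd hZ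
  refine ⟨x, fun hM => not_measurableSet_diagonalSet ?_⟩
  have hslice : diagonalSet = (fun a => cantorCode (u, a)) ⁻¹'
      (cantorCode '' (Prod.snd ⁻¹' diagonalSet) \ (x +ᵥ Z)) := by
    ext a
    simp [cantorCode_injective.mem_set_image, hux a]
  rw [hslice]
  exact (continuous_cantorCode.comp (Continuous.prodMk_right u)).measurable hM
end
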